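/- arXiv:2302.03247 — 2 statements merged into one kernel-verified Lean document; each statement's English description precedes it below -/
import Mathlib

section
/- For all real numbers h > 0 and P > 0, writing R(p) = √(p² + h²), ∫₀^P [ R(p)/p − (3h²/p²) · ln( (p + R(p)) / h ) + 4h² · (R(p) − h)/p³ ] dp = √(P² + h²) − 3h + (3h²/P) · ln( (P + √(P² + h²)) / h ) − 2h² · (√(P² + h²) − h)/P². -/
/-!
With `R = √(p² + h²)` and `L = log ((p + R) / h)`, so that `R' = p / R` and `L' = 1 / R`, the
function `F = R + 3h² L / p - 2h² (R - h) / p²` is a primitive of the integrand on `p > 0`, and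
`F → 3h` as `p → 0⁺`. The integrand equals `N / p³` with `N = p² R - 3h² p L + 4h² (R - h)`;
since `N(0) = 0`, `N' = 3 (p R - h² L)`, and `(p R - h² L)' = 2p² / R`, two applications of
L'Hôpital's rule show that it tends to `0` at `0⁺`. Hence it is continuous on `[0, P]`, and the
fundamental theorem of calculus with a one-sided limit at `0` gives the value `F(P) - 3h`.
-/

open Real Filter Set Topology

theorem tendsto_div_pow_succ_nhdsGT_zero {f f' : ℝ → ℝ} {l : Filter ℝ} (n : ℕ)
    (hf : ∀ x, HasDerivAt f (f' x) x) (hf0 : f 0 = 0)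
    (hdiv : Tendsto (fun x => f' x / ((n + 1) * x ^ n)) (𝓝[>] 0) l) :
    Tendsto (fun x => f x / x ^ (n + 1)) (𝓝[>] 0) l := by
  have hpow (x : ℝ) : HasDerivAt (fun x => x ^ (n + 1)) ((n + 1) * x ^ n) x := by
    simpa using hasDerivAt_pow (n + 1) x
  refine HasDerivAt.lhopital_zero_nhdsGT (.of_forall hf) (.of_forall hpow) ?_ ?_ ?_ hdiv
  · filter_upwards [self_mem_nhdsWithin] with x (hx : 0 < x)
    positivity
  · simpa [hf0] using (hf 0).continuousAt.tendsto.mono_left nhdsWithin_le_nhds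
  · simpa using ((continuous_pow (n + 1)).tendsto (0 : ℝ)).mono_left nhdsWithin_le_nhds

section

variable {h : ℝ}

theorem hasDerivAt_sqrt_sq_add_sq (hh : h ≠ 0) (x : ℝ) :
    HasDerivAt (fun p => √(p ^ 2 + h ^ 2)) (x / √(x ^ 2 + h ^ 2)) x := by
  have hpos : 0 < x ^ 2 + h ^ 2 := by positivity
  refine ((hasDerivAt_sqrt hpos.ne').comp x ((hasDerivAt_pow 2 x).add_const (h ^ 2))).congr_deriv ?_
  field_simp
  ring

theorem add_sqrt_sq_add_sq_pos (hh : h ≠ 0) (x : ℝ) : 0 < x + √(x ^ 2 + h ^ 2) := by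
  have : |x| < √(x ^ 2 + h ^ 2) := by
    rw [← sqrt_sq_eq_abs]
    exact sqrt_lt_sqrt (sq_nonneg x) (lt_add_of_pos_right _ (by positivity))
  linarith [neg_abs_le x]

theorem hasDerivAt_log_add_sqrt_sq_add_sq (hh : h ≠ 0) (x : ℝ) :
    HasDerivAt (fun p => log ((p + √(p ^ 2 + h ^ 2)) / h)) (1 / √(x ^ 2 + h ^ 2)) x := by
  have hR : 0 < √(x ^ 2 + h ^ 2) := by positivity
  have hsum := add_sqrt_sq_add_sq_pos hh x
  have hinner := ((hasDerivAt_id x).add (hasDerivAt_sqrt_sq_add_sq hh x)).div_const h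
  refine ((hasDerivAt_log (div_ne_zero hsum.ne' hh)).comp x hinner).congr_deriv ?_
  field_simp
  ring

theorem hasDerivAt_primitive (hh : h ≠ 0) {x : ℝ} (hx : x ≠ 0) :
    HasDerivAt (fun p => √(p ^ 2 + h ^ 2) + 3 * h ^ 2 / p * log ((p + √(p ^ 2 + h ^ 2)) / h)
        - 2 * h ^ 2 * (√(p ^ 2 + h ^ 2) - h) / p ^ 2)
      (√(x ^ 2 + h ^ 2) / x - 3 * h ^ 2 / x ^ 2 * log ((x + √(x ^ 2 + h ^ 2)) / h)
        + 4 * h ^ 2 * (√(x ^ 2 + h ^ 2) - h) / x ^ 3) x := by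
  have hR := hasDerivAt_sqrt_sq_add_sq hh x
  have hcoef := (hasDerivAt_const x (3 * h ^ 2)).fun_div (hasDerivAt_id' x) hx
  have hsq : HasDerivAt (fun p => p ^ 2) (2 * x) x := by simpa using hasDerivAt_pow 2 x
  have hquot := ((hR.sub_const h).const_mul (2 * h ^ 2)).fun_div hsq (by positivity)
  refine ((hR.add (hcoef.mul (hasDerivAt_log_add_sqrt_sq_add_sq hh x))).sub hquot).congr_deriv ?_
  have hR2 : √(x ^ 2 + h ^ 2) ^ 2 = x ^ 2 + h ^ 2 := sq_sqrt (by positivity)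
  have : √(x ^ 2 + h ^ 2) ≠ 0 := by positivity
  field_simp
  linear_combination (-x ^ 2) * hR2

theorem tendsto_mul_sqrt_sub_log_div_sq (hh : 0 < h) :
    Tendsto (fun p => (p * √(p ^ 2 + h ^ 2) - h ^ 2 * log ((p + √(p ^ 2 + h ^ 2)) / h)) / p ^ 2)
      (𝓝[>] 0) (𝓝 0) := by
  refine tendsto_div_pow_succ_nhdsGT_zero 1 (f' := fun x => 2 * x ^ 2 / √(x ^ 2 + h ^ 2))
    (fun x => ?_) (by simp [sqrt_sq hh.le, hh.ne']) ?_
  · have hR2 : √(x ^ 2 + h ^ 2) ^ 2 = x ^ 2 + h ^ 2 := sq_sqrt (by positivity)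
    have : √(x ^ 2 + h ^ 2) ≠ 0 := by positivity
    refine (((hasDerivAt_id x).mul (hasDerivAt_sqrt_sq_add_sq hh.ne' x)).sub
      ((hasDerivAt_log_add_sqrt_sq_add_sq hh.ne' x).const_mul (h ^ 2))).congr_deriv ?_
    field_simp
    simp only [id_eq]
    linear_combination hR2
  · have hcont : ContinuousAt (fun x => x / √(x ^ 2 + h ^ 2)) 0 :=
      continuousAt_id.div (hasDerivAt_sqrt_sq_add_sq hh.ne' 0).continuousAt (by positivity)
    refine (show Tendsto (fun x => x / √(x ^ 2 + h ^ 2)) _ (𝓝 0) by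
      simpa using hcont.tendsto.mono_left nhdsWithin_le_nhds).congr' ?_
    filter_upwards [self_mem_nhdsWithin] with x (hx : 0 < x)
    have : √(x ^ 2 + h ^ 2) ≠ 0 := by positivity
    field_simp
    ring

theorem tendsto_integrand (hh : 0 < h) :
    Tendsto (fun p => √(p ^ 2 + h ^ 2) / p - 3 * h ^ 2 / p ^ 2 * log ((p + √(p ^ 2 + h ^ 2)) / h)
        + 4 * h ^ 2 * (√(p ^ 2 + h ^ 2) - h) / p ^ 3) (𝓝[>] 0) (𝓝 0) := by
  have hnum : Tendsto (fun p => (p ^ 2 * √(p ^ 2 + h ^ 2)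
      - 3 * h ^ 2 * p * log ((p + √(p ^ 2 + h ^ 2)) / h) + 4 * h ^ 2 * (√(p ^ 2 + h ^ 2) - h))
        / p ^ (2 + 1)) (𝓝[>] 0) (𝓝 0) := by
    refine tendsto_div_pow_succ_nhdsGT_zero 2
      (f' := fun p => 3 * (p * √(p ^ 2 + h ^ 2) - h ^ 2 * log ((p + √(p ^ 2 + h ^ 2)) / h)))
      (fun x => ?_) (by simp [sqrt_sq hh.le]) ?_
    · have hR := hasDerivAt_sqrt_sq_add_sq hh.ne' x
      have hR2 : √(x ^ 2 + h ^ 2) ^ 2 = x ^ 2 + h ^ 2 := sq_sqrt (by positivity)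
      have : √(x ^ 2 + h ^ 2) ≠ 0 := by positivity
      have hsq : HasDerivAt (fun p => p ^ 2) (2 * x) x := by simpa using hasDerivAt_pow 2 x
      refine ((hsq.mul hR).sub (((hasDerivAt_id' x).const_mul (3 * h ^ 2)).mul
        (hasDerivAt_log_add_sqrt_sq_add_sq hh.ne' x)) |>.add
        ((hR.sub_const h).const_mul (4 * h ^ 2))).congr_deriv ?_
      field_simp
      linear_combination (-x) * hR2
    · refine (tendsto_mul_sqrt_sub_log_div_sq hh).congr' ?_
      filter_upwards [self_mem_nhdsWithin] with x (hx : 0 < x)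
      field_simp
      ring
  refine hnum.congr' ?_
  filter_upwards [self_mem_nhdsWithin] with x (hx : 0 < x)
  field_simp
  ring

theorem tendsto_primitive (hh : 0 < h) :
    Tendsto (fun p => √(p ^ 2 + h ^ 2) + 3 * h ^ 2 / p * log ((p + √(p ^ 2 + h ^ 2)) / h)
        - 2 * h ^ 2 * (√(p ^ 2 + h ^ 2) - h) / p ^ 2) (𝓝[>] 0) (𝓝 (3 * h)) := by
  have hR := hasDerivAt_sqrt_sq_add_sq hh.ne'
  have hR0 : Tendsto (fun p => √(p ^ 2 + h ^ 2)) (𝓝[>] 0) (𝓝 h) := by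
    simpa [sqrt_sq hh.le] using (hR 0).continuousAt.tendsto.mono_left nhdsWithin_le_nhds
  have hlog : Tendsto (fun p => log ((p + √(p ^ 2 + h ^ 2)) / h) / p ^ (0 + 1)) (𝓝[>] 0) (𝓝 h⁻¹) := by
    refine tendsto_div_pow_succ_nhdsGT_zero 0 (hasDerivAt_log_add_sqrt_sq_add_sq hh.ne')
      (by simp [sqrt_sq hh.le, hh.ne']) ?_
    simpa using hR0.inv₀ hh.ne'
  have hsqrt : Tendsto (fun p => (√(p ^ 2 + h ^ 2) - h) / p ^ (1 + 1)) (𝓝[>] 0) (𝓝 (2 * h)⁻¹) := by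
    refine tendsto_div_pow_succ_nhdsGT_zero 1 (fun x => (hR x).sub_const h)
      (by simp [sqrt_sq hh.le]) ?_
    refine ((hR0.const_mul 2).inv₀ (by positivity)).congr' ?_
    filter_upwards [self_mem_nhdsWithin] with x (hx : 0 < x)
    field_simp
    ring
  have := (hR0.add (hlog.const_mul (3 * h ^ 2))).sub (hsqrt.const_mul (2 * h ^ 2))
  convert this.congr' ?_ using 2
  · field_simp
    ring
  · filter_upwards [self_mem_nhdsWithin] with x (hx : 0 < x)
    simp only [zero_add, pow_one]
    ring

theorem continuousOn_integrand (hh : 0 < h) :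
    ContinuousOn (fun p => √(p ^ 2 + h ^ 2) / p
      - 3 * h ^ 2 / p ^ 2 * log ((p + √(p ^ 2 + h ^ 2)) / h)
      + 4 * h ^ 2 * (√(p ^ 2 + h ^ 2) - h) / p ^ 3) (Ici 0) := by
  intro x hx
  rcases (mem_Ici.mp hx).eq_or_lt with rfl | hx
  · -- every term has junk value `0` at `p = 0`, which happens to be the limit
    rw [← continuousWithinAt_Ioi_iff_Ici, ContinuousWithinAt]
    simpa using tendsto_integrand hh
  · have hR := (hasDerivAt_sqrt_sq_add_sq hh.ne' x).continuousAt
    have hL := (hasDerivAt_log_add_sqrt_sq_add_sq hh.ne' x).continuousAt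
    have hx := hx.ne'
    exact ContinuousAt.continuousWithinAt (by fun_prop (disch := simp [hx]))

end

/-- Level-2 PBF integral (case #6):
∫₀^P [R(p)/p − (3h²/p²) ln((p+R(p))/h) + 4h²(R(p)−h)/p³] dp
  = √(P²+h²) − 3h + (3h²/P) ln((P+√(P²+h²))/h) − 2h²(√(P²+h²)−h)/P²,
where R(p) = √(p²+h²). -/
theorem stmt_9 (h P : ℝ) (hh : 0 < h) (hP : 0 < P) :
    ∫ p in (0:ℝ)..P,
        (Real.sqrt (p ^ 2 + h ^ 2) / p
          - (3 * h ^ 2 / p ^ 2) * Real.log ((p + Real.sqrt (p ^ 2 + h ^ 2)) / h)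
          + 4 * h ^ 2 * (Real.sqrt (p ^ 2 + h ^ 2) - h) / p ^ 3)
      = Real.sqrt (P ^ 2 + h ^ 2) - 3 * h
          + (3 * h ^ 2 / P) * Real.log ((P + Real.sqrt (P ^ 2 + h ^ 2)) / h)
          - 2 * h ^ 2 * (Real.sqrt (P ^ 2 + h ^ 2) - h) / P ^ 2 := by
  rw [intervalIntegral.integral_eq_sub_of_hasDerivAt_of_tendsto hP
    (fun x hx => hasDerivAt_primitive hh.ne' hx.1.ne')
    (((continuousOn_integrand hh).mono Icc_subset_Ici_self).intervalIntegrable_of_Icc hP.le)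
    (tendsto_primitive hh)
    ((hasDerivAt_primitive hh.ne' hP.ne').continuousAt.tendsto.mono_left nhdsWithin_le_nhds)]
  ring
end

section
/- For all real numbers h1 > 0, h2 > 0, and P > 0, setting h = √(h1² + h2²) and R4 = √(P² + h²), ∫₀^P ( √(p² + h²) − h2 ) / (p² + h1²) dp = ln( (P + R4) / h ) − (h2/h1) · arctan( h1·P / (h² + h2·R4) ). -/
/-! Multiplying numerator and denominator by `R + h₂`, where `R = √(p² + h²)` and `R² = p² + h₁² + h₂²`,
turns the integrand into `1 / (R + h₂)`. The claimed right-hand side is `F P - F 0` for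
`F y = log (y + R) - (h₂/h₁) arctan (h₁ y / (h² + h₂ R))`: the logarithm has derivative `1 / R`, and
the identity `(h² + h₂ R)² + h₁² y² = h² (R + h₂)²` makes the arctangent term have derivative
`h₁ / (R (R + h₂))`, so that `F' = 1/R - h₂ / (R (R + h₂)) = 1 / (R + h₂)`. -/

open Real

theorem hasDerivAt_sqrt_sq_add {c : ℝ} (hc : 0 < c) (x : ℝ) :
    HasDerivAt (fun y => √(y ^ 2 + c)) (x / √(x ^ 2 + c)) x := by
  have hpoly : HasDerivAt (fun y => y ^ 2 + c) (2 * x) x := by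
    simpa using (hasDerivAt_pow 2 x).add_const c
  convert hpoly.sqrt (by positivity) using 1
  field_simp

theorem add_sqrt_sq_add_pos {c : ℝ} (hc : 0 < c) (x : ℝ) : 0 < x + √(x ^ 2 + c) := by
  have : |x| < √(x ^ 2 + c) := by
    rw [← sqrt_sq_eq_abs]
    exact sqrt_lt_sqrt (sq_nonneg x) (by linarith)
  linarith [neg_abs_le x]

theorem hasDerivAt_log_add_sqrt_sq_add {c : ℝ} (hc : 0 < c) (x : ℝ) :
    HasDerivAt (fun y => log (y + √(y ^ 2 + c))) (√(x ^ 2 + c))⁻¹ x := by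
  have hxs := add_sqrt_sq_add_pos hc x
  have hsum : HasDerivAt (fun y => y + √(y ^ 2 + c)) (1 + x / √(x ^ 2 + c)) x :=
    (hasDerivAt_id' x).add (hasDerivAt_sqrt_sq_add hc x)
  convert hsum.log hxs.ne' using 1
  field_simp
  ring

theorem sq_add_mul_sqrt_add_sq_mul_sq (a b x : ℝ) :
    (a ^ 2 + b ^ 2 + b * √(x ^ 2 + (a ^ 2 + b ^ 2))) ^ 2 + a ^ 2 * x ^ 2
      = (a ^ 2 + b ^ 2) * (√(x ^ 2 + (a ^ 2 + b ^ 2)) + b) ^ 2 := by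
  have hs := sq_sqrt (show 0 ≤ x ^ 2 + (a ^ 2 + b ^ 2) by positivity)
  linear_combination (b ^ 2 - (a ^ 2 + b ^ 2)) * hs

theorem hasDerivAt_arctan_mul_div_add_mul_sqrt {a b : ℝ} (ha : a ≠ 0) (hb : 0 ≤ b) (x : ℝ) :
    HasDerivAt (fun y => arctan (a * y / (a ^ 2 + b ^ 2 + b * √(y ^ 2 + (a ^ 2 + b ^ 2)))))
      (a / (√(x ^ 2 + (a ^ 2 + b ^ 2)) * (√(x ^ 2 + (a ^ 2 + b ^ 2)) + b))) x := by
  have key := sq_add_mul_sqrt_add_sq_mul_sq a b x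
  set c := a ^ 2 + b ^ 2
  have hc : 0 < c := by positivity
  set s := √(x ^ 2 + c) with hs_def
  have hs : 0 < s := by positivity
  have hs_sq : s ^ 2 = x ^ 2 + c := sq_sqrt (by positivity)
  have hden : 0 < c + b * s := by positivity
  have hnum : HasDerivAt (fun y => a * y) a x := by
    simpa using (hasDerivAt_id' x).const_mul a
  have hquot : HasDerivAt (fun y => a * y / (c + b * √(y ^ 2 + c)))
      ((a * (c + b * s) - a * x * (b * (x / s))) / (c + b * s) ^ 2) x :=
    hnum.div ((hasDerivAt_sqrt_sq_add hc x).const_mul b |>.const_add c) hden.ne'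
  convert hquot.arctan using 1
  field_simp
  rw [← hs_def, key]
  linear_combination (-(s + b) * (c + b * s) ^ 2 * b) * hs_sq

theorem sqrt_sub_div_eq_inv_sqrt_add {a b : ℝ} (ha : a ≠ 0) (hb : 0 ≤ b) (x : ℝ) :
    (√(x ^ 2 + (a ^ 2 + b ^ 2)) - b) / (x ^ 2 + a ^ 2) = (√(x ^ 2 + (a ^ 2 + b ^ 2)) + b)⁻¹ := by
  have hs_sq := sq_sqrt (show 0 ≤ x ^ 2 + (a ^ 2 + b ^ 2) by positivity)
  rw [div_eq_iff (by positivity), inv_mul_eq_div, eq_div_iff (by positivity)]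
  linear_combination hs_sq

noncomputable def pbfAntiderivative (a b y : ℝ) : ℝ :=
  log (y + √(y ^ 2 + (a ^ 2 + b ^ 2)))
    - (b / a) * arctan (a * y / (a ^ 2 + b ^ 2 + b * √(y ^ 2 + (a ^ 2 + b ^ 2))))

theorem hasDerivAt_pbfAntiderivative {a b : ℝ} (ha : a ≠ 0) (hb : 0 ≤ b) (x : ℝ) :
    HasDerivAt (pbfAntiderivative a b) (√(x ^ 2 + (a ^ 2 + b ^ 2)) + b)⁻¹ x := by
  refine ((hasDerivAt_log_add_sqrt_sq_add (c := a ^ 2 + b ^ 2) (by positivity) x).sub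
    ((hasDerivAt_arctan_mul_div_add_mul_sqrt ha hb x).const_mul (b / a))).congr_deriv ?_
  field_simp
  ring

theorem pbfAntiderivative_zero (a b : ℝ) :
    pbfAntiderivative a b 0 = log √(a ^ 2 + b ^ 2) := by
  simp [pbfAntiderivative]

theorem stmt_10_general (h1 h2 P : ℝ) (hh1 : 0 < h1) (hh2 : 0 < h2) :
    (∫ p in (0:ℝ)..P,
        (Real.sqrt (p ^ 2 + (h1 ^ 2 + h2 ^ 2)) - h2) / (p ^ 2 + h1 ^ 2))
      = Real.log ((P + Real.sqrt (P ^ 2 + (h1 ^ 2 + h2 ^ 2)))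
            / Real.sqrt (h1 ^ 2 + h2 ^ 2))
        - (h2 / h1) * Real.arctan (h1 * P
            / ((h1 ^ 2 + h2 ^ 2) + h2 * Real.sqrt (P ^ 2 + (h1 ^ 2 + h2 ^ 2)))) := by
  simp_rw [sqrt_sub_div_eq_inv_sqrt_add hh1.ne' hh2.le]
  have hcont : Continuous fun p : ℝ => (√(p ^ 2 + (h1 ^ 2 + h2 ^ 2)) + h2)⁻¹ :=
    (by fun_prop : Continuous fun p : ℝ => √(p ^ 2 + (h1 ^ 2 + h2 ^ 2)) + h2).inv₀
      fun p => by positivity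
  rw [intervalIntegral.integral_eq_sub_of_hasDerivAt
      (fun x _ => hasDerivAt_pbfAntiderivative hh1.ne' hh2.le x) (hcont.intervalIntegrable 0 P),
    pbfAntiderivative_zero, log_div (add_sqrt_sq_add_pos (by positivity) P).ne' (by positivity),
    pbfAntiderivative]
  ring

/-- Level-1 PBF integral (case #3): with h = √(h₁²+h₂²), R₄ = √(P²+h²),
∫₀^P (√(p²+h²) − h₂)/(p²+h₁²) dp = ln((P+R₄)/h) − (h₂/h₁) arctan(h₁P/(h²+h₂R₄)). -/
theorem stmt_10 (h1 h2 P : ℝ) (hh1 : 0 < h1) (hh2 : 0 < h2) (hP : 0 < P) :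
    (∫ p in (0:ℝ)..P,
        (Real.sqrt (p ^ 2 + (h1 ^ 2 + h2 ^ 2)) - h2) / (p ^ 2 + h1 ^ 2))
      = Real.log ((P + Real.sqrt (P ^ 2 + (h1 ^ 2 + h2 ^ 2)))
            / Real.sqrt (h1 ^ 2 + h2 ^ 2))
        - (h2 / h1) * Real.arctan (h1 * P
            / ((h1 ^ 2 + h2 ^ 2) + h2 * Real.sqrt (P ^ 2 + (h1 ^ 2 + h2 ^ 2)))) :=
  stmt_10_general h1 h2 P hh1 hh2
end
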